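/- arXiv:1808.01494 — 2 statements merged into one kernel-verified Lean document; each statement's English description precedes it below -/
import Mathlib

section
/- Let a < b and c, Q ∈ ℝ. Suppose ψ : ℝ × (a,b] → ℝ is continuously differentiable on ℝ × (a,b], twice continuously differentiable and harmonic (ψ_xx + ψ_yy = 0) in the open strip ℝ × (a,b), and satisfies ψ(x,b) = Q and ∂ψ/∂y (x,b) = c for all x ∈ ℝ. Then ψ(x,y) = c·(y−b) + Q for all (x,y) ∈ ℝ × (a,b]. -/
/-!
For harmonic `ψ` the function `g = ψ_x - i (ψ_y - c)` is holomorphic in the strip; it is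
continuous up to the line `y = b`, where it vanishes because the Cauchy data are constant.
Extended by `0` above the line, `g` stays continuous and its integrals over rectangles still vanish
(a rectangle crossing the line splits into two rectangles touching it), so by Morera's theorem it
is holomorphic on the half-plane `y > a`, and the identity theorem forces `g = 0`. Hence
`∇ψ = (0, c)` on the convex set `ℝ × (a, b]`, and `ψ` is affine.
-/

open Set Filter

/-- The Laplacian `f_xx + f_yy` of `f : ℝ × ℝ → ℝ`. -/
noncomputable def lap (f : ℝ × ℝ → ℝ) (p : ℝ × ℝ) : ℝ :=
  fderiv ℝ (fun q => fderiv ℝ f q (1, 0)) p (1, 0) +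
    fderiv ℝ (fun q => fderiv ℝ f q (0, 1)) p (0, 1)

namespace Complex

open intervalIntegral
open scoped Interval

variable {E : Type*} [NormedAddCommGroup E] [NormedSpace ℂ E]

theorem wedgeIntegral_add_wedgeIntegral_split (z w : ℂ) (b : ℝ) {f : ℂ → E}
    (hz₁ : IntervalIntegrable (fun y : ℝ => f (z.re + y * I)) MeasureTheory.volume z.im b)
    (hz₂ : IntervalIntegrable (fun y : ℝ => f (z.re + y * I)) MeasureTheory.volume b w.im)
    (hw₁ : IntervalIntegrable (fun y : ℝ => f (w.re + y * I)) MeasureTheory.volume z.im b)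
    (hw₂ : IntervalIntegrable (fun y : ℝ => f (w.re + y * I)) MeasureTheory.volume b w.im) :
    wedgeIntegral z w f + wedgeIntegral w z f =
      (wedgeIntegral z (w.re + b * I) f + wedgeIntegral (w.re + b * I) z f) +
        (wedgeIntegral (z.re + b * I) w f + wedgeIntegral w (z.re + b * I) f) := by
  simp only [wedgeIntegral, add_re, ofReal_re, mul_re, I_re, mul_zero, ofReal_im, I_im, mul_one,
    sub_self, add_zero, add_im, mul_im, zero_add]
  simp only [integral_symm z.re w.re, integral_symm z.im w.im, integral_symm z.im b,
    integral_symm b w.im, ← integral_add_adjacent_intervals hz₁ hz₂,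
    ← integral_add_adjacent_intervals hw₁ hw₂, smul_add, smul_neg]
  abel

theorem wedgeIntegral_add_wedgeIntegral_eq_zero_of_notMem {z w : ℂ} {b : ℝ} {f : ℂ → E}
    (hc : ContinuousOn f (Rectangle z w))
    (hd : DifferentiableOn ℂ f (Rectangle z w \ {u | u.im = b}))
    (hb : b ∉ Ioo (min z.im w.im) (max z.im w.im)) :
    wedgeIntegral z w f + wedgeIntegral w z f = 0 := by
  rw [wedgeIntegral_add_wedgeIntegral_eq]
  refine integral_boundary_rect_eq_zero_of_continuousOn_of_differentiableOn f z w hc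
    (hd.mono fun u hu => ⟨?_, ?_⟩)
  · exact ⟨Ioo_subset_Icc_self hu.1, Ioo_subset_Icc_self hu.2⟩
  · rintro rfl
    exact hb hu.2

theorem wedgeIntegral_add_wedgeIntegral_eq_zero {z w : ℂ} {b : ℝ} {f : ℂ → E}
    (hc : ContinuousOn f (Rectangle z w))
    (hd : DifferentiableOn ℂ f (Rectangle z w \ {u | u.im = b})) :
    wedgeIntegral z w f + wedgeIntegral w z f = 0 := by
  by_cases hb : b ∈ Ioo (min z.im w.im) (max z.im w.im)
  swap
  · exact wedgeIntegral_add_wedgeIntegral_eq_zero_of_notMem hc hd hb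
  have hb' : b ∈ [[z.im, w.im]] := Ioo_subset_Icc_self hb
  have hlow : Rectangle z (w.re + b * I) ⊆ Rectangle z w := by
    simpa [Rectangle] using reProdIm_subset_iff'.2 (.inl ⟨subset_rfl, uIcc_subset_uIcc_left hb'⟩)
  have hup : Rectangle (z.re + b * I) w ⊆ Rectangle z w := by
    simpa [Rectangle] using reProdIm_subset_iff'.2 (.inl ⟨subset_rfl, uIcc_subset_uIcc_right hb'⟩)
  have hvert : ∀ x ∈ [[z.re, w.re]], ∀ y₁ ∈ [[z.im, w.im]], ∀ y₂ ∈ [[z.im, w.im]],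
      IntervalIntegrable (fun y : ℝ => f ((x : ℂ) + y * I)) MeasureTheory.volume y₁ y₂ :=
    fun x hx y₁ hy₁ y₂ hy₂ => ContinuousOn.intervalIntegrable <| hc.comp (by fun_prop)
      fun y hy => by simpa [Rectangle, mem_reProdIm] using ⟨hx, uIcc_subset_uIcc hy₁ hy₂ hy⟩
  rw [wedgeIntegral_add_wedgeIntegral_split z w b (hvert _ left_mem_uIcc _ left_mem_uIcc _ hb')
    (hvert _ left_mem_uIcc _ hb' _ right_mem_uIcc) (hvert _ right_mem_uIcc _ left_mem_uIcc _ hb')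
    (hvert _ right_mem_uIcc _ hb' _ right_mem_uIcc),
    wedgeIntegral_add_wedgeIntegral_eq_zero_of_notMem (hc.mono hlow)
      (hd.mono (sdiff_subset_sdiff_left hlow)) ?_,
    wedgeIntegral_add_wedgeIntegral_eq_zero_of_notMem (hc.mono hup)
      (hd.mono (sdiff_subset_sdiff_left hup)) ?_, add_zero]
  all_goals simpa using fun h => h.le

theorem differentiableOn_of_continuousOn_of_differentiableOn_diff_line {U : Set ℂ} {b : ℝ}
    {f : ℂ → E} [CompleteSpace E] (hU : IsOpen U) (hc : ContinuousOn f U)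
    (hd : DifferentiableOn ℂ f (U \ {u | u.im = b})) :
    DifferentiableOn ℂ f U :=
  (isConservativeOn_and_continuousOn_iff_isDifferentiableOn hU).1
    ⟨fun _ _ hR => eq_neg_of_add_eq_zero_left <| wedgeIntegral_add_wedgeIntegral_eq_zero
      (hc.mono hR) (hd.mono (sdiff_subset_sdiff_left hR)), hc⟩

theorem eqOn_zero_of_continuousOn_of_differentiableOn_strip [CompleteSpace E] {g : ℂ → E}
    {a b : ℝ} (hc : ContinuousOn g {z | a < z.im ∧ z.im ≤ b})
    (hd : DifferentiableOn ℂ g {z | a < z.im ∧ z.im < b}) (hb : ∀ z : ℂ, z.im = b → g z = 0) :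
    EqOn g 0 {z | a < z.im ∧ z.im ≤ b} := by
  set G : ℂ → E := fun z => if z.im < b then g z else 0
  have hGc : ContinuousOn G {z | a < z.im} := by
    refine ContinuousOn.if (fun z hz => ?_) (hc.mono fun z hz => ?_) continuousOn_const
    · rw [frontier_setOfPred_im_lt] at hz
      exact hb z hz.2
    · rw [closure_setOfPred_im_lt] at hz
      exact hz
  have hGd : DifferentiableOn ℂ G ({z | a < z.im} \ {z | z.im = b}) := by
    rintro z ⟨hza, hzb⟩
    refine DifferentiableAt.differentiableWithinAt ?_
    rcases lt_or_gt_of_ne hzb with hlt | hgt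
    · have hstrip : IsOpen {z : ℂ | a < z.im ∧ z.im < b} :=
        (isOpen_lt continuous_const continuous_im).inter (isOpen_lt continuous_im continuous_const)
      refine ((hd z ⟨hza, hlt⟩).differentiableAt
        (hstrip.mem_nhds ⟨hza, hlt⟩)).congr_of_eventuallyEq ?_
      filter_upwards [(isOpen_lt continuous_im continuous_const).mem_nhds hlt] with w hw
      exact if_pos hw
    · refine (differentiableAt_const (0 : E)).congr_of_eventuallyEq ?_
      filter_upwards [(isOpen_lt continuous_const continuous_im).mem_nhds hgt] with w hw
      exact if_neg hw.not_gt
  have hU : IsOpen {z : ℂ | a < z.im} := isOpen_lt continuous_const continuous_im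
  obtain ⟨t, hat, hbt⟩ : ∃ t : ℝ, a < t ∧ b < t :=
    ⟨max a b + 1, by linarith [le_max_left a b], by linarith [le_max_right a b]⟩
  have hz₀ : b < ((t : ℂ) * I).im := by simpa using hbt
  have hG : EqOn G 0 {z | a < z.im} :=
    ((differentiableOn_of_continuousOn_of_differentiableOn_diff_line hU hGc hGd).analyticOnNhd hU
      ).eqOn_zero_of_preconnected_of_eventuallyEq_zero (convex_halfSpace_im_gt a).isPreconnected
      (z₀ := t * I) (by simpa using hat)
      (by
        filter_upwards [(isOpen_lt continuous_const continuous_im).mem_nhds hz₀] with w hw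
        exact if_neg hw.not_gt)
  intro z ⟨hza, hzb⟩
  rcases hzb.lt_or_eq with hlt | heq
  · simpa [G, hlt] using hG hza
  · exact hb z heq

end Complex

open Complex InnerProductSpace Topology Laplacian

theorem lap_eq_fderiv_fderiv {ψ : ℝ × ℝ → ℝ} {p : ℝ × ℝ}
    (h : DifferentiableAt ℝ (fderiv ℝ ψ) p) :
    lap ψ p = fderiv ℝ (fderiv ℝ ψ) p (1, 0) (1, 0) + fderiv ℝ (fderiv ℝ ψ) p (0, 1) (0, 1) := by
  simp [lap, fderiv_clm_apply h (differentiableAt_const _)]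

theorem laplacian_comp_equivRealProd {ψ : ℝ × ℝ → ℝ} {z : ℂ}
    (h : DifferentiableAt ℝ (fderiv ℝ ψ) (z.re, z.im)) :
    Δ (ψ ∘ equivRealProdCLM) z = lap ψ (z.re, z.im) := by
  have hcomp : iteratedFDeriv ℝ 2 (ψ ∘ equivRealProdCLM) z =
      (iteratedFDeriv ℝ 2 ψ (z.re, z.im)).compContinuousLinearMap fun _ => equivRealProdCLM := by
    simpa [iteratedFDerivWithin_univ] using
      equivRealProdCLM.iteratedFDerivWithin_comp_right ψ uniqueDiffOn_univ (mem_univ z) 2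
  rw [laplacian_eq_iteratedFDeriv_complexPlane]
  beta_reduce
  rw [hcomp, lap_eq_fderiv_fderiv h]
  simp [iteratedFDeriv_two_apply]

theorem harmonicAt_comp_equivRealProd {ψ : ℝ × ℝ → ℝ} {z : ℂ}
    (hψ : ContDiffAt ℝ 2 ψ (z.re, z.im)) (hlap : lap ψ =ᶠ[𝓝 (z.re, z.im)] 0) :
    HarmonicAt (ψ ∘ equivRealProdCLM) z := by
  refine ⟨hψ.comp z equivRealProdCLM.contDiff.contDiffAt, ?_⟩
  have hcont : Tendsto (fun w : ℂ => (w.re, w.im)) (𝓝 z) (𝓝 (z.re, z.im)) :=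
    equivRealProdCLM.continuous.tendsto z
  filter_upwards [hcont.eventually (hψ.eventually (by simp)), hcont.eventually hlap] with w hw hw'
  rw [laplacian_comp_equivRealProd ((hw.fderiv_right le_rfl).differentiableAt one_ne_zero)]
  exact hw'

/-- For `L = Dψ(p)` this is `ψ_x - i ψ_y = 2 ∂ψ/∂z`, holomorphic in `p` when `ψ` is harmonic. -/
noncomputable def complexGradient (L : ℝ × ℝ →L[ℝ] ℝ) : ℂ :=
  L (1, 0) - I * L (0, 1)

theorem continuous_complexGradient : Continuous complexGradient := by
  unfold complexGradient
  fun_prop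

theorem complexGradient_injective : Function.Injective complexGradient := by
  intro L M h
  simp only [complexGradient, Complex.ext_iff, sub_re, sub_im, ofReal_re, ofReal_im, mul_re,
    mul_im, I_re, I_im] at h
  refine ContinuousLinearMap.prod_ext (ContinuousLinearMap.ext_ring ?_)
    (ContinuousLinearMap.ext_ring ?_) <;> simp <;> linarith [h.1, h.2]

theorem differentiableAt_complexGradient_fderiv {ψ : ℝ × ℝ → ℝ} {z : ℂ}
    (hψ : ContDiffAt ℝ 2 ψ (z.re, z.im)) (hlap : lap ψ =ᶠ[𝓝 (z.re, z.im)] 0) :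
    DifferentiableAt ℂ (fun w : ℂ => complexGradient (fderiv ℝ ψ (w.re, w.im))) z := by
  simpa [complexGradient, ContinuousLinearEquiv.comp_right_fderiv] using
    HarmonicAt.differentiableAt_complex_partial (harmonicAt_comp_equivRealProd hψ hlap)

theorem differentiableOn_complexGradient_fderivWithin {ψ : ℝ × ℝ → ℝ} {S O : Set (ℝ × ℝ)}
    (hψ : ContDiffOn ℝ 2 ψ O) (hharm : ∀ p ∈ O, lap ψ p = 0) (hO : IsOpen O) (hOS : O ⊆ S) :
    DifferentiableOn ℂ (fun z : ℂ => complexGradient (fderivWithin ℝ ψ S (z.re, z.im)))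
      {z | (z.re, z.im) ∈ O} := by
  intro z hz
  have hopen : IsOpen {z : ℂ | (z.re, z.im) ∈ O} := hO.preimage equivRealProdCLM.continuous
  refine DifferentiableAt.differentiableWithinAt ?_
  refine (differentiableAt_complexGradient_fderiv (hψ.contDiffAt (hO.mem_nhds hz))
    (eventually_of_mem (hO.mem_nhds hz) hharm)).congr_of_eventuallyEq ?_
  filter_upwards [hopen.mem_nhds hz] with w hw
  rw [fderivWithin_of_mem_nhds (mem_of_superset (hO.mem_nhds hw) hOS)]

theorem HasFDerivWithinAt.apply_eq_zero_of_forall_line {E F : Type*} [NormedAddCommGroup E]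
    [NormedSpace ℝ E] [NormedAddCommGroup F] [NormedSpace ℝ F] {f : E → F} {L : E →L[ℝ] F}
    {S : Set E} {p v : E} (h : HasFDerivWithinAt f L S p) (hS : ∀ t : ℝ, p + t • v ∈ S)
    (hf : ∀ t : ℝ, f (p + t • v) = f p) : L v = 0 := by
  have hline : HasDerivAt (fun t : ℝ => p + t • v) v 0 := by
    simpa using ((hasDerivAt_id (0 : ℝ)).smul_const v).const_add p
  have hcomp := (show HasFDerivWithinAt f L S (p + (0 : ℝ) • v) by simpa using h).comp_hasDerivAt
    (0 : ℝ) hline (Eventually.of_forall hS)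
  rw [show f ∘ (fun t : ℝ => p + t • v) = fun _ => f p from funext hf] at hcomp
  exact hcomp.unique (hasDerivAt_const 0 (f p))

theorem Convex.eq_add_of_fderivWithin_eq {E F : Type*} [NormedAddCommGroup E] [NormedSpace ℝ E]
    [NormedAddCommGroup F] [NormedSpace ℝ F] {S : Set E} {f : E → F} {L : E →L[ℝ] F}
    (hS : Convex ℝ S) (hf : DifferentiableOn ℝ f S) (hL : ∀ q ∈ S, fderivWithin ℝ f S q = L)
    {x y : E} (hx : x ∈ S) (hy : y ∈ S) : f y = f x + L (y - x) := by
  have h := hS.norm_image_sub_le_of_norm_fderivWithin_le' hf (φ := L) (C := 0)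
    (fun q hq => by simp [hL q hq]) hx hy
  rwa [zero_mul, norm_le_zero_iff, sub_sub, sub_eq_zero] at h

/-- A function which is `C¹` on the half-open strip `ℝ × (a,b]`,
harmonic in the open strip `ℝ × (a,b)`, and whose Cauchy data on the line `y = b` are
the constants `ψ = Q` and `∂ψ/∂y = c`, is the affine function `c(y−b) + Q`. -/
theorem strip_constant_cauchy_data_affine
    (a b c Q : ℝ) (ψ : ℝ × ℝ → ℝ) (hab : a < b)
    (hdiff : ∀ p ∈ {p : ℝ × ℝ | a < p.2 ∧ p.2 ≤ b},
      DifferentiableWithinAt ℝ ψ {p : ℝ × ℝ | a < p.2 ∧ p.2 ≤ b} p)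
    (hC1 : ContinuousOn (fun p => fderivWithin ℝ ψ {p : ℝ × ℝ | a < p.2 ∧ p.2 ≤ b} p)
      {p : ℝ × ℝ | a < p.2 ∧ p.2 ≤ b})
    (hC2 : ContDiffOn ℝ 2 ψ {p : ℝ × ℝ | a < p.2 ∧ p.2 < b})
    (hharm : ∀ p ∈ {p : ℝ × ℝ | a < p.2 ∧ p.2 < b}, lap ψ p = 0)
    (htop : ∀ x : ℝ, ψ (x, b) = Q)
    (hder : ∀ x : ℝ,
      fderivWithin ℝ ψ {p : ℝ × ℝ | a < p.2 ∧ p.2 ≤ b} (x, b) (0, 1) = c) :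
    ∀ p ∈ {p : ℝ × ℝ | a < p.2 ∧ p.2 ≤ b}, ψ p = c * (p.2 - b) + Q := by
  set S : Set (ℝ × ℝ) := {p | a < p.2 ∧ p.2 ≤ b}
  set L₀ : ℝ × ℝ →L[ℝ] ℝ := c • ContinuousLinearMap.snd ℝ ℝ ℝ
  set g : ℂ → ℂ := fun z => complexGradient (fderivWithin ℝ ψ S (z.re, z.im)) - complexGradient L₀
  have hg_top : ∀ z : ℂ, z.im = b → g z = 0 := by
    rintro z rfl
    have hψx : fderivWithin ℝ ψ S (z.re, z.im) (1, 0) = 0 :=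
      (hdiff _ ⟨hab, le_rfl⟩).hasFDerivWithinAt.apply_eq_zero_of_forall_line
        (fun t => by simpa [S] using hab) (fun t => by simpa using (htop _).trans (htop _).symm)
    simp [g, complexGradient, L₀, hψx, hder]
  have hD_cont : ContinuousOn (fun z : ℂ => fderivWithin ℝ ψ S (z.re, z.im))
      {z | a < z.im ∧ z.im ≤ b} :=
    hC1.comp (by fun_prop) fun _ hz => hz
  have hO : IsOpen {p : ℝ × ℝ | a < p.2 ∧ p.2 < b} :=
    (isOpen_lt continuous_const continuous_snd).inter (isOpen_lt continuous_snd continuous_const)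
  have hg := Complex.eqOn_zero_of_continuousOn_of_differentiableOn_strip
    ((continuous_complexGradient.comp_continuousOn hD_cont).sub continuousOn_const)
    ((differentiableOn_complexGradient_fderivWithin (S := S) hC2 hharm hO
      fun _ hp => ⟨hp.1, hp.2.le⟩).sub (differentiableOn_const _)) hg_top
  have hD : ∀ q ∈ S, fderivWithin ℝ ψ S q = L₀ := by
    rintro ⟨x, y⟩ ⟨hy₁, hy₂⟩
    have hz : g (x + y * I) = 0 := hg ⟨by simpa using hy₁, by simpa using hy₂⟩
    exact complexGradient_injective (sub_eq_zero.1 (by simpa [g] using hz))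
  have hS : Convex ℝ S := (convex_Ioc a b).linear_preimage (LinearMap.snd ℝ ℝ ℝ)
  intro p hp
  rw [hS.eq_add_of_fderivWithin_eq hdiff hD (⟨hab, le_rfl⟩ : (p.1, b) ∈ S) hp, htop]
  simp [L₀, add_comm]
end

section
/- Let g > 0, β₀ < β₁, λ ≥ g β₁, and Q ∈ ℝ. Then there is no function ψ : ℝ × [β₀,β₁] → ℝ that is continuously differentiable on ℝ × [β₀,β₁], harmonic (ψ_xx + ψ_yy = 0) in the open strip ℝ × (β₀,β₁), and satisfies the overdetermined boundary conditions ψ(x,β₀) = 0, ∂ψ/∂y (x,β₀) = √(2λ−2gβ₀), ψ(x,β₁) = Q, and ∂ψ/∂y (x,β₁) = √(2λ−2gβ₁) for all x ∈ ℝ. -/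
/-!
Put `a = √(2λ - 2gβ₀)` and `b = √(2λ - 2gβ₁)`, so `b < a`. Since `ψ` is harmonic, the function
`h = ψ_x - i (ψ_y - a)` is holomorphic in the open strip (Cauchy–Riemann), and it is continuous up
to the boundary. On the lower edge `ψ` is constant, so `ψ_x = 0` there, and `ψ_y = a`; hence `h`
vanishes on the lower edge. Extending `h` by zero below that edge gives a function that is
continuous across the line and holomorphic off it, hence holomorphic (Morera), and zero on an open
set; by the identity theorem `h ≡ 0`, so `ψ_y = a` on the upper edge as well, contradicting `b < a`.
-/

open Set Filter

open Complex Topology InnerProductSpace Laplacian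
open scoped Interval

namespace Complex

variable {E : Type*} [NormedAddCommGroup E] [NormedSpace ℂ E] {f : ℂ → E} {U : Set ℂ} {c : ℝ}

theorem wedgeIntegral_add_wedgeIntegral_eq_zero_of_notMem_Ioo {z w : ℂ}
    (hc : ContinuousOn f U) (hd : DifferentiableOn ℂ f (U \ im ⁻¹' {c}))
    (hzw : Rectangle z w ⊆ U) (hcI : c ∉ Ioo (min z.im w.im) (max z.im w.im)) :
    wedgeIntegral z w f + wedgeIntegral w z f = 0 := by
  rw [wedgeIntegral_add_wedgeIntegral_eq]
  refine integral_boundary_rect_eq_zero_of_continuousOn_of_differentiableOn f z w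
    (hc.mono hzw) (hd.mono fun p hp => ⟨hzw ?_, fun hpc => hcI ?_⟩)
  · exact ⟨Ioo_subset_Icc_self hp.1, Ioo_subset_Icc_self hp.2⟩
  · simpa [show p.im = c from hpc] using hp.2

theorem wedgeIntegral_add_wedgeIntegral_split_im {z w : ℂ} (hzc : z.im ≤ c) (hcw : c ≤ w.im)
    (hf : ContinuousOn f (Rectangle z w)) :
    wedgeIntegral z w f + wedgeIntegral w z f =
      (wedgeIntegral z (w.re + c * I) f + wedgeIntegral (w.re + c * I) z f) +
      (wedgeIntegral (z.re + c * I) w f + wedgeIntegral w (z.re + c * I) f) := by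
  have hint : ∀ x ∈ [[z.re, w.re]], ∀ a b, a ∈ [[z.im, w.im]] → b ∈ [[z.im, w.im]] →
      IntervalIntegrable (fun y : ℝ => f ((x : ℂ) + (y : ℂ) * I)) MeasureTheory.volume a b := by
    intro x hx a b ha hb
    refine ContinuousOn.intervalIntegrable (hf.comp (by fun_prop) fun y hy => ?_)
    exact ⟨by simpa using hx, by simpa using uIcc_subset_uIcc ha hb hy⟩
  have hzI : z.im ∈ [[z.im, w.im]] := left_mem_uIcc
  have hwI : w.im ∈ [[z.im, w.im]] := right_mem_uIcc
  have hcI : c ∈ [[z.im, w.im]] := Icc_subset_uIcc ⟨hzc, hcw⟩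
  simp only [wedgeIntegral_add_wedgeIntegral_eq, add_re, add_im, ofReal_re, ofReal_im, mul_re,
    mul_im, I_re, I_im, mul_zero, mul_one, sub_self, add_zero, zero_add]
  rw [← intervalIntegral.integral_add_adjacent_intervals (hint _ left_mem_uIcc _ _ hzI hcI)
      (hint _ left_mem_uIcc _ _ hcI hwI),
    ← intervalIntegral.integral_add_adjacent_intervals (hint _ right_mem_uIcc _ _ hzI hcI)
      (hint _ right_mem_uIcc _ _ hcI hwI)]
  simp only [smul_add]
  abel

variable [CompleteSpace E]

theorem differentiableOn_of_differentiableOn_diff_preimage_im (hU : IsOpen U)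
    (hc : ContinuousOn f U) (hd : DifferentiableOn ℂ f (U \ im ⁻¹' {c})) :
    DifferentiableOn ℂ f U := by
  refine (isConservativeOn_and_continuousOn_iff_isDifferentiableOn hU).1 ⟨?_, hc⟩
  intro z w hzw
  refine eq_neg_of_add_eq_zero_left ?_
  wlog hle : z.im ≤ w.im generalizing z w
  · rw [add_comm]
    exact this w z (by rwa [Rectangle, uIcc_comm w.re, uIcc_comm w.im]) (le_of_not_ge hle)
  by_cases hcI : c ∈ Ioo z.im w.im
  · have hsub : ∀ p q : ℂ, p.re ∈ [[z.re, w.re]] → q.re ∈ [[z.re, w.re]] →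
        p.im ∈ [[z.im, w.im]] → q.im ∈ [[z.im, w.im]] → Rectangle p q ⊆ U :=
      fun p q hp hq hp' hq' => .trans (reProdIm_subset_iff.2
        (prod_mono (uIcc_subset_uIcc hp hq) (uIcc_subset_uIcc hp' hq'))) hzw
    rw [wedgeIntegral_add_wedgeIntegral_split_im hcI.1.le hcI.2.le (hc.mono hzw)]
    have hcz : c ∈ [[z.im, w.im]] := Icc_subset_uIcc (Ioo_subset_Icc_self hcI)
    rw [wedgeIntegral_add_wedgeIntegral_eq_zero_of_notMem_Ioo hc hd
        (hsub _ _ (by simp) (by simp) (by simp) (by simpa using hcz)) (by simp [hcI.1.le]),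
      wedgeIntegral_add_wedgeIntegral_eq_zero_of_notMem_Ioo hc hd
        (hsub _ _ (by simp) (by simp) (by simpa using hcz) (by simp)) (by simp [hcI.2.le]),
      add_zero]
  · exact wedgeIntegral_add_wedgeIntegral_eq_zero_of_notMem_Ioo hc hd hzw
      (by rwa [min_eq_left hle, max_eq_right hle])

theorem eqOn_zero_of_eq_zero_on_lower_edge {h : ℂ → E} {β₀ β₁ : ℝ} (hβ : β₀ < β₁)
    (hc : ContinuousOn h (im ⁻¹' Icc β₀ β₁)) (hd : DifferentiableOn ℂ h (im ⁻¹' Ioo β₀ β₁))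
    (hbot : ∀ x : ℝ, h (x + β₀ * I) = 0) :
    EqOn h 0 (im ⁻¹' Icc β₀ β₁) := by
  -- `H` extends `h` by zero below the strip (as `h` vanishes on the lower edge); written with a
  -- clamped imaginary part, it is visibly continuous.
  set H : ℂ → E := fun z => h (z.re + (max z.im β₀ : ℝ) * I)
  set U : Set ℂ := im ⁻¹' Iio β₁
  have hU : IsOpen U := isOpen_Iio.preimage continuous_im
  have hH_upper : ∀ z : ℂ, β₀ ≤ z.im → H z = h z := fun z hz => by
    simp only [H, max_eq_left hz, re_add_im]
  have hH_lower : ∀ z : ℂ, z.im ≤ β₀ → H z = 0 := fun z hz => by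
    simp only [H, max_eq_right hz, hbot]
  have hHc : ContinuousOn H U :=
    hc.comp (by fun_prop) fun z hz => by
      simpa using ⟨(hz : z.im < β₁).le, hβ.le⟩
  have hHd : DifferentiableOn ℂ H (U \ im ⁻¹' {β₀}) := by
    rintro z ⟨hzU, hzβ⟩
    rcases lt_or_gt_of_ne hzβ with hlt | hgt
    · have hH : H =ᶠ[𝓝 z] 0 := by
        filter_upwards [(isOpen_Iio.preimage continuous_im).mem_nhds hlt] with w hw
        exact hH_lower w (le_of_lt hw)
      exact (differentiableAt_const (0 : E)).congr_of_eventuallyEq hH |>.differentiableWithinAt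
    · have hzs : im ⁻¹' Ioo β₀ β₁ ∈ 𝓝 z :=
        (isOpen_Ioo.preimage continuous_im).mem_nhds ⟨hgt, hzU⟩
      have hH : H =ᶠ[𝓝 z] h := by
        filter_upwards [hzs] with w hw
        exact hH_upper w (le_of_lt hw.1)
      exact ((hd.differentiableAt hzs).congr_of_eventuallyEq hH).differentiableWithinAt
  have hHa : AnalyticOnNhd ℂ H U :=
    (differentiableOn_of_differentiableOn_diff_preimage_im hU hHc hHd).analyticOnNhd hU
  have hH0 : EqOn H 0 U := by
    refine hHa.eqOn_zero_of_preconnected_of_eventuallyEq_zero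
      ((convex_Iio β₁).linear_preimage imLm).isPreconnected (z₀ := ((β₀ - 1 : ℝ) : ℂ) * I) ?_ ?_
    · simpa [U] using hβ.trans' (sub_one_lt β₀)
    · filter_upwards [(isOpen_Iio.preimage continuous_im).mem_nhds
        (show (((β₀ - 1 : ℝ) : ℂ) * I).im < β₀ by simp)] with w hw
      exact hH_lower w (le_of_lt hw)
  refine EqOn.of_subset_closure (s := im ⁻¹' Ico β₀ β₁) (fun z hz => ?_) hc continuousOn_const
    (preimage_mono Ico_subset_Icc_self) ?_
  · rw [← hH_upper z hz.1]
    exact hH0 hz.2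
  · rw [closure_preimage_im, closure_Ico hβ.ne]

end Complex

section Calculus

variable {𝕜 E F : Type*} [NontriviallyNormedField 𝕜] [NormedAddCommGroup E] [NormedSpace 𝕜 E]
  [NormedAddCommGroup F] [NormedSpace 𝕜 F]

theorem HasFDerivWithinAt.apply_eq_zero_of_forall_add_smul {f : E → F} {f' : E →L[𝕜] F}
    {s : Set E} {p v : E} (hf : HasFDerivWithinAt f f' s p)
    (hs : ∀ t : 𝕜, p + t • v ∈ s) (hconst : ∀ t : 𝕜, f (p + t • v) = f p) :
    f' v = 0 := by
  have hline : HasDerivAt (fun t : 𝕜 => p + t • v) v 0 := by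
    simpa using ((hasDerivAt_id (0 : 𝕜)).smul_const v).const_add p
  have hcomp : HasDerivWithinAt (fun t : 𝕜 => f (p + t • v)) (f' v) univ 0 :=
    hf.comp_hasDerivWithinAt_of_eq 0 hline.hasDerivWithinAt (fun t _ => hs t) (by simp)
  rw [hasDerivWithinAt_univ, funext hconst] at hcomp
  exact hcomp.unique (hasDerivAt_const 0 (f p))

theorem ContDiffAt.fderiv_fderiv_apply_eq_iteratedFDeriv {ψ : E → F} {p : E}
    (hψ : ContDiffAt 𝕜 2 ψ p) (v : E) :
    fderiv 𝕜 (fun q => fderiv 𝕜 ψ q v) p v = iteratedFDeriv 𝕜 2 ψ p ![v, v] := by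
  have hd : DifferentiableAt 𝕜 (fderiv 𝕜 ψ) p :=
    (hψ.fderiv_right (m := 1) le_rfl).differentiableAt one_ne_zero
  rw [fderiv_clm_apply hd (differentiableAt_const v), iteratedFDeriv_two_apply]
  simp

end Calculus

theorem laplacian_comp_equivRealProdCLM {ψ : ℝ × ℝ → ℝ} {z : ℂ}
    (hψ : ContDiffAt ℝ 2 ψ (equivRealProdCLM z)) :
    Δ (ψ ∘ equivRealProdCLM) z = lap ψ (equivRealProdCLM z) := by
  have hcomp : ∀ v : ℂ, iteratedFDeriv ℝ 2 (ψ ∘ equivRealProdCLM) z ![v, v] =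
      iteratedFDeriv ℝ 2 ψ (equivRealProdCLM z) ![equivRealProdCLM v, equivRealProdCLM v] := by
    intro v
    rw [← iteratedFDerivWithin_univ, ← preimage_univ (f := equivRealProdCLM),
      equivRealProdCLM.iteratedFDerivWithin_comp_right ψ uniqueDiffOn_univ (mem_univ _),
      iteratedFDerivWithin_univ]
    simp only [ContinuousMultilinearMap.compContinuousLinearMap_apply]
    congr 1
    funext i
    fin_cases i <;> rfl
  rw [laplacian_eq_iteratedFDeriv_complexPlane]
  beta_reduce
  rw [hcomp, hcomp, lap, hψ.fderiv_fderiv_apply_eq_iteratedFDeriv,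
    hψ.fderiv_fderiv_apply_eq_iteratedFDeriv]
  simp

theorem harmonicOnNhd_comp_equivRealProdCLM {ψ : ℝ × ℝ → ℝ} {O : Set (ℝ × ℝ)} (hO : IsOpen O)
    (hψ : ContDiffOn ℝ 2 ψ O) (hlap : ∀ p ∈ O, lap ψ p = 0) :
    HarmonicOnNhd (ψ ∘ equivRealProdCLM) (equivRealProdCLM ⁻¹' O) := by
  have hO' : IsOpen (equivRealProdCLM ⁻¹' O) := hO.preimage equivRealProdCLM.continuous
  refine fun z hz => ⟨(hψ.contDiffAt (hO.mem_nhds hz)).comp z equivRealProdCLM.contDiff.contDiffAt,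
    ?_⟩
  filter_upwards [hO'.mem_nhds hz] with w hw
  rw [laplacian_comp_equivRealProdCLM (hψ.contDiffAt (hO.mem_nhds hw))]
  exact hlap _ hw

noncomputable def complexGradientWithin (ψ : ℝ × ℝ → ℝ) (s : Set (ℝ × ℝ)) (z : ℂ) : ℂ :=
  fderivWithin ℝ ψ s (z.re, z.im) (1, 0) - I * fderivWithin ℝ ψ s (z.re, z.im) (0, 1)

theorem continuousOn_complexGradientWithin {ψ : ℝ × ℝ → ℝ} {s : Set (ℝ × ℝ)}
    (hψ : ContinuousOn (fderivWithin ℝ ψ s) s) :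
    ContinuousOn (complexGradientWithin ψ s) (equivRealProdCLM ⁻¹' s) := by
  have hD : ContinuousOn (fun z : ℂ => fderivWithin ℝ ψ s (z.re, z.im))
      (equivRealProdCLM ⁻¹' s) :=
    hψ.comp (by fun_prop) fun z hz => by simpa using hz
  unfold complexGradientWithin
  fun_prop

theorem differentiableOn_complexGradientWithin {ψ : ℝ × ℝ → ℝ} {s O : Set (ℝ × ℝ)}
    (hO : IsOpen O) (hOs : O ⊆ s) (hψ : ContDiffOn ℝ 2 ψ O) (hlap : ∀ p ∈ O, lap ψ p = 0) :
    DifferentiableOn ℂ (complexGradientWithin ψ s) (equivRealProdCLM ⁻¹' O) := by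
  intro z hz
  refine (_root_.HarmonicAt.differentiableAt_complex_partial
    (harmonicOnNhd_comp_equivRealProdCLM hO hψ hlap z hz) |>.congr_of_eventuallyEq ?_)
    |>.differentiableWithinAt
  filter_upwards [(hO.preimage equivRealProdCLM.continuous).mem_nhds hz] with w hw
  have hs : s ∈ 𝓝 (w.re, w.im) := mem_of_superset (hO.mem_nhds (by simpa using hw)) hOs
  simp [complexGradientWithin, fderivWithin_of_mem_nhds hs, equivRealProdCLM.comp_right_fderiv]

/-- For `g > 0`, `β₀ < β₁`, `λ ≥ gβ₁`, there is no function which is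
`C¹` on the closed strip `ℝ × [β₀,β₁]`, harmonic in the open strip, and satisfies the
overdetermined boundary conditions `ψ = 0`, `∂ψ/∂y = √(2λ−2gβ₀)` on `y = β₀` and
`ψ = Q`, `∂ψ/∂y = √(2λ−2gβ₁)` on `y = β₁`. -/
theorem no_overdetermined_strip_solution
    (g β₀ β₁ lam Q : ℝ) (hg : 0 < g) (hβ : β₀ < β₁) (hlam : g * β₁ ≤ lam) :
    ¬ ∃ ψ : ℝ × ℝ → ℝ,
      (∀ p ∈ {p : ℝ × ℝ | β₀ ≤ p.2 ∧ p.2 ≤ β₁},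
        DifferentiableWithinAt ℝ ψ {p : ℝ × ℝ | β₀ ≤ p.2 ∧ p.2 ≤ β₁} p) ∧
      ContinuousOn (fun p => fderivWithin ℝ ψ {p : ℝ × ℝ | β₀ ≤ p.2 ∧ p.2 ≤ β₁} p)
        {p : ℝ × ℝ | β₀ ≤ p.2 ∧ p.2 ≤ β₁} ∧
      ContDiffOn ℝ 2 ψ {p : ℝ × ℝ | β₀ < p.2 ∧ p.2 < β₁} ∧
      (∀ p ∈ {p : ℝ × ℝ | β₀ < p.2 ∧ p.2 < β₁}, lap ψ p = 0) ∧
      (∀ x : ℝ, ψ (x, β₀) = 0) ∧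
      (∀ x : ℝ, fderivWithin ℝ ψ {p : ℝ × ℝ | β₀ ≤ p.2 ∧ p.2 ≤ β₁} (x, β₀) (0, 1)
          = Real.sqrt (2 * lam - 2 * g * β₀)) ∧
      (∀ x : ℝ, ψ (x, β₁) = Q) ∧
      (∀ x : ℝ, fderivWithin ℝ ψ {p : ℝ × ℝ | β₀ ≤ p.2 ∧ p.2 ≤ β₁} (x, β₁) (0, 1)
          = Real.sqrt (2 * lam - 2 * g * β₁)) := by
  rintro ⟨ψ, hdiff, hC1, hC2, hlap, hψ₀, hψy₀, hψ₁, hψy₁⟩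
  set S := {p : ℝ × ℝ | β₀ ≤ p.2 ∧ p.2 ≤ β₁}
  set a := Real.sqrt (2 * lam - 2 * g * β₀)
  have hba : Real.sqrt (2 * lam - 2 * g * β₁) < a :=
    Real.sqrt_lt_sqrt (by nlinarith) (by nlinarith)
  have hψx : ∀ y C, β₀ ≤ y → y ≤ β₁ → (∀ x, ψ (x, y) = C) →
      ∀ x, fderivWithin ℝ ψ S (x, y) (1, 0) = 0 := fun y C hy₀ hy₁ hC x =>
    (hdiff _ ⟨hy₀, hy₁⟩).hasFDerivWithinAt.apply_eq_zero_of_forall_add_smul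
      (fun t => by simpa [S] using And.intro hy₀ hy₁) (fun t => by simp [hC])
  have hO : IsOpen {p : ℝ × ℝ | β₀ < p.2 ∧ p.2 < β₁} :=
    (isOpen_lt continuous_const continuous_snd).inter (isOpen_lt continuous_snd continuous_const)
  have hOS : {p : ℝ × ℝ | β₀ < p.2 ∧ p.2 < β₁} ⊆ S := fun p hp => ⟨hp.1.le, hp.2.le⟩
  have hzero := Complex.eqOn_zero_of_eq_zero_on_lower_edge
    (h := fun z => complexGradientWithin ψ S z + I * a) hβ
    ((continuousOn_complexGradientWithin hC1).add continuousOn_const)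
    ((differentiableOn_complexGradientWithin hO hOS hC2 hlap).add (differentiableOn_const _))
    (fun x => by simp [complexGradientWithin, hψx β₀ 0 le_rfl hβ.le hψ₀, hψy₀])
  have htop := hzero (show (β₁ : ℂ) * I ∈ im ⁻¹' Icc β₀ β₁ by simpa using hβ.le)
  exact hba.ne (by simpa [complexGradientWithin, hψx β₁ Q hβ.le le_rfl hψ₁, hψy₁, Complex.ext_iff,
    neg_add_eq_zero] using htop)
end
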